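/- Let f ∈ ℝ[x₁,…,xₙ] satisfy conditions (C1), (C2) and (C3) and let λ_f be a map of minimal barycentric coordinates of f. Suppose there are weights ω(α*) > 0 for α* ∈ D(f) such that Σ_{α*∈D(f)} ω(α*) ≤ 1, and for every α* ∈ D(f): f_{α*} > −ω(α*)·Θ(f,λ_f,α*) if α* ∈ (2ℕ₀)ⁿ, and |f_{α*}| < ω(α*)·Θ(f,λ_f,α*) if α* ∉ (2ℕ₀)ⁿ. Then f is coercive on ℝⁿ. -/

import Mathlib

open MvPolynomial Filter

noncomputable section

open scoped Classical

/-- The embedding of exponent vectors into `ℝⁿ`. -/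
def expEmbed {n : ℕ} (α : Fin n →₀ ℕ) : Fin n → ℝ := fun i => (α i : ℝ)

/-- The Newton polytope at infinity `New∞(f) = conv(A(f) ∪ {0})`. -/
def newtonInfty {n : ℕ} (f : MvPolynomial (Fin n) ℝ) : Set (Fin n → ℝ) :=
  convexHull ℝ (expEmbed '' ((insert 0 f.support : Finset (Fin n →₀ ℕ)) : Set (Fin n →₀ ℕ)))

/-- The vertex set `V₀(f)` of the Newton polytope at infinity, as a
finset of exponent vectors. -/
def V0 {n : ℕ} (f : MvPolynomial (Fin n) ℝ) : Finset (Fin n →₀ ℕ) :=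
  (insert 0 f.support).filter fun α => expEmbed α ∈ Set.extremePoints ℝ (newtonInfty f)

/-- The set `V(f) = V₀(f) \ {0}` of vertices at infinity. -/
def Vinf {n : ℕ} (f : MvPolynomial (Fin n) ℝ) : Finset (Fin n →₀ ℕ) := (V0 f).erase 0

/-- An exponent vector with all entries even, i.e. a member of `(2ℕ₀)ⁿ`. -/
def IsEvenExp {n : ℕ} (α : Fin n →₀ ℕ) : Prop := ∀ i, Even (α i)

/-- Condition (C1): `V(f) ⊆ (2ℕ₀)ⁿ`. -/
def CondC1 {n : ℕ} (f : MvPolynomial (Fin n) ℝ) : Prop := ∀ α ∈ Vinf f, IsEvenExp α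

/-- Condition (C2): positive coefficients at all vertices at infinity. -/
def CondC2 {n : ℕ} (f : MvPolynomial (Fin n) ℝ) : Prop := ∀ α ∈ Vinf f, 0 < f.coeff α

/-- Condition (C3): `V(f)` contains a vector `2 kᵢ eᵢ` for every `i`. -/
def CondC3 {n : ℕ} (f : MvPolynomial (Fin n) ℝ) : Prop :=
  ∀ i : Fin n, ∃ k : ℕ, 0 < k ∧ Finsupp.single i (2 * k) ∈ Vinf f

/-- An exponent vector of `f` is gem degenerate if it is no vertex at infinity but lies in
some nonempty face of `New∞(f)` not containing the origin. -/
def IsGemDegenerate {n : ℕ} (f : MvPolynomial (Fin n) ℝ) (α : Fin n →₀ ℕ) : Prop :=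
  α ∈ f.support ∧ α ∉ Vinf f ∧
    ∃ G : Set (Fin n → ℝ), G.Nonempty ∧ IsExtreme ℝ (newtonInfty f) G ∧
      (0 : Fin n → ℝ) ∉ G ∧ expEmbed α ∈ G

/-- The set `D(f)` of gem degenerate exponent vectors of `f`. -/
def Dfin {n : ℕ} (f : MvPolynomial (Fin n) ℝ) : Finset (Fin n →₀ ℕ) :=
  f.support.filter fun α => IsGemDegenerate f α

/-- `f` is gem regular if `D(f) = ∅`. -/
def GemRegular {n : ℕ} (f : MvPolynomial (Fin n) ℝ) : Prop := ∀ α, ¬ IsGemDegenerate f α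

/-- `V₀ᶜ(f) = A(f) \ V₀(f)`. -/
def V0c {n : ℕ} (f : MvPolynomial (Fin n) ℝ) : Finset (Fin n →₀ ℕ) := f.support \ V0 f

/-- A map of minimal barycentric coordinates of `f`. -/
def IsMinBary {n : ℕ} (f : MvPolynomial (Fin n) ℝ)
    (lam : (Fin n →₀ ℕ) → (Fin n →₀ ℕ) → ℝ) : Prop :=
  (∀ αs α, 0 ≤ lam αs α ∧ lam αs α ≤ 1) ∧
  ∀ αs ∈ V0c f, ∃ W : Finset (Fin n →₀ ℕ), W ⊆ V0 f ∧
    AffineIndependent ℝ (fun w : W => expEmbed (w : Fin n →₀ ℕ)) ∧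
    (∀ α ∈ W, 0 < lam αs α) ∧
    (∀ α ∈ V0 f, α ∉ W → lam αs α = 0) ∧
    (∑ α ∈ W, lam αs α) = 1 ∧
    (∑ α ∈ W, lam αs α • expEmbed α) = expEmbed αs

/-- `W_{α*}(λ_f)`, the minimal vertex representation of `α*` corresponding to `λ_f`. -/
def Wfin {n : ℕ} (f : MvPolynomial (Fin n) ℝ)
    (lam : (Fin n →₀ ℕ) → (Fin n →₀ ℕ) → ℝ) (αs : Fin n →₀ ℕ) : Finset (Fin n →₀ ℕ) :=
  (V0 f).filter fun α => 0 < lam αs α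

/-- The circuit number `Θ(f, λ_f, α*)`. -/
def circuitNumber {n : ℕ} (f : MvPolynomial (Fin n) ℝ)
    (lam : (Fin n →₀ ℕ) → (Fin n →₀ ℕ) → ℝ) (αs : Fin n →₀ ℕ) : ℝ :=
  ∏ α ∈ Wfin f lam αs, (f.coeff α / lam αs α) ^ (lam αs α)

/-- `g` is coercive on `ℝⁿ`: `g(x) → +∞` whenever `‖x‖ → +∞`. -/
def Coercive {n : ℕ} (g : (Fin n → ℝ) → ℝ) : Prop :=
  Tendsto g (comap (fun x : Fin n → ℝ => ‖x‖) atTop) atTop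


/-! For `|x|^α := ∏ |xᵢ|^{αᵢ}` write `S(x) = ∑_{α ∈ V(f)} f_α |x|^α` and
`u(x) = ∑_{α ∈ V(f)} |x|^α`; by (C1) `S` is the vertex part of `f`, by (C2) `S ≥ c u` for some
`c > 0`, and by (C3) `u(x) ≥ ‖x‖` for large `x`. A gem degenerate `α*` is a positive convex
combination of the vertices of a face avoiding the origin, so `W_{α*} ⊆ V(f)` and weighted AM–GM
gives `Θ |x|^{α*} ≤ S(x)`; the hypotheses on the weights then bound the degenerate part below by
`-ρ S` with `ρ < 1`. Every other non-vertex exponent has a minimal face containing `0`, hence is a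
combination of vertices at infinity with total weight `s < 1`, and its monomial is
`O(u^s) = o(u)`. Altogether `f ≥ η u - C` with `η > 0`. -/

open Finset

section AbsMonomial

variable {n : ℕ}

def absMonomial (α : Fin n →₀ ℕ) (x : Fin n → ℝ) : ℝ := ∏ i, |x i| ^ α i

lemma absMonomial_nonneg (α : Fin n →₀ ℕ) (x : Fin n → ℝ) : 0 ≤ absMonomial α x :=
  prod_nonneg fun _ _ => pow_nonneg (abs_nonneg _) _

@[simp] lemma absMonomial_zero (x : Fin n → ℝ) : absMonomial 0 x = 1 := by
  simp [absMonomial]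

lemma absMonomial_single (i : Fin n) (m : ℕ) (x : Fin n → ℝ) :
    absMonomial (Finsupp.single i m) x = |x i| ^ m := by
  simp [absMonomial, Finsupp.single_apply, pow_ite]

lemma abs_prod_pow_eq_absMonomial (α : Fin n →₀ ℕ) (x : Fin n → ℝ) :
    |∏ i, x i ^ α i| = absMonomial α x := by
  simp [absMonomial, abs_prod, abs_pow]

lemma IsEvenExp.prod_pow_eq_absMonomial {α : Fin n →₀ ℕ} (hα : IsEvenExp α) (x : Fin n → ℝ) :
    ∏ i, x i ^ α i = absMonomial α x :=
  prod_congr rfl fun i _ => ((hα i).pow_abs (x i)).symm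

lemma absMonomial_eq_prod_rpow {s : Finset (Fin n →₀ ℕ)} {μ : (Fin n →₀ ℕ) → ℝ}
    (hμ : ∀ β ∈ s, 0 ≤ μ β) {α : Fin n →₀ ℕ} (hα : expEmbed α = ∑ β ∈ s, μ β • expEmbed β)
    (x : Fin n → ℝ) : absMonomial α x = ∏ β ∈ s, absMonomial β x ^ μ β := by
  have hαi : ∀ i, (α i : ℝ) = ∑ β ∈ s, (β i : ℝ) * μ β := fun i => by
    simpa [expEmbed, mul_comm] using congrFun hα i
  calc absMonomial α x = ∏ i, ∏ β ∈ s, |x i| ^ ((β i : ℝ) * μ β) := by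
        refine prod_congr rfl fun i _ => ?_
        rw [← Real.rpow_natCast, hαi, Real.rpow_sum_of_nonneg (abs_nonneg _)
          fun β hβ => mul_nonneg (Nat.cast_nonneg _) (hμ β hβ)]
    _ = ∏ β ∈ s, absMonomial β x ^ μ β := by
        rw [Finset.prod_comm]
        refine prod_congr rfl fun β _ => ?_
        rw [absMonomial, ← Real.finsetProd_rpow _ _ fun i _ => pow_nonneg (abs_nonneg _) _]
        refine prod_congr rfl fun i _ => ?_
        rw [← Real.rpow_natCast, ← Real.rpow_mul (abs_nonneg _)]

lemma prod_div_rpow_mul_absMonomial_le_sum {W : Finset (Fin n →₀ ℕ)} {w c : (Fin n →₀ ℕ) → ℝ}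
    (hw : ∀ β ∈ W, 0 < w β) (hw1 : ∑ β ∈ W, w β = 1) (hc : ∀ β ∈ W, 0 ≤ c β)
    {α : Fin n →₀ ℕ} (hα : expEmbed α = ∑ β ∈ W, w β • expEmbed β) (x : Fin n → ℝ) :
    (∏ β ∈ W, (c β / w β) ^ w β) * absMonomial α x ≤ ∑ β ∈ W, c β * absMonomial β x := by
  have hnonneg : ∀ β ∈ W, 0 ≤ c β / w β * absMonomial β x := fun β hβ =>
    mul_nonneg (div_nonneg (hc β hβ) (hw β hβ).le) (absMonomial_nonneg _ _)
  calc (∏ β ∈ W, (c β / w β) ^ w β) * absMonomial α x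
      = ∏ β ∈ W, (c β / w β * absMonomial β x) ^ w β := by
        rw [absMonomial_eq_prod_rpow (fun β hβ => (hw β hβ).le) hα, ← prod_mul_distrib]
        exact prod_congr rfl fun β hβ => (Real.mul_rpow
          (div_nonneg (hc β hβ) (hw β hβ).le) (absMonomial_nonneg _ _)).symm
    _ ≤ ∑ β ∈ W, w β * (c β / w β * absMonomial β x) :=
        Real.geom_mean_le_arith_mean_weighted W w _ (fun β hβ => (hw β hβ).le) hw1 hnonneg
    _ = ∑ β ∈ W, c β * absMonomial β x := sum_congr rfl fun β hβ => by
        field_simp [(hw β hβ).ne']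

lemma absMonomial_le_sum_rpow {s : Finset (Fin n →₀ ℕ)} {μ : (Fin n →₀ ℕ) → ℝ}
    (hμ : ∀ β ∈ s, 0 ≤ μ β) (hμs : 0 < ∑ β ∈ s, μ β) {α : Fin n →₀ ℕ}
    (hα : expEmbed α = ∑ β ∈ s, μ β • expEmbed β) (x : Fin n → ℝ) :
    absMonomial α x ≤ (∑ β ∈ s, absMonomial β x) ^ ∑ β ∈ s, μ β := by
  set m := ∑ β ∈ s, μ β
  have hw : ∀ β ∈ s, 0 ≤ μ β / m := fun β hβ => div_nonneg (hμ β hβ) hμs.le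
  calc absMonomial α x = (∏ β ∈ s, absMonomial β x ^ (μ β / m)) ^ m := by
        rw [absMonomial_eq_prod_rpow hμ hα, ← Real.finsetProd_rpow _ _
          fun β _ => Real.rpow_nonneg (absMonomial_nonneg _ _) _]
        exact prod_congr rfl fun β _ => by
          rw [← Real.rpow_mul (absMonomial_nonneg _ _), div_mul_cancel₀ _ hμs.ne']
    _ ≤ (∑ β ∈ s, μ β / m * absMonomial β x) ^ m := by
        gcongr
        · exact prod_nonneg fun β _ => Real.rpow_nonneg (absMonomial_nonneg _ _) _
        · exact Real.geom_mean_le_arith_mean_weighted s _ _ hw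
            (by rw [← sum_div, div_self hμs.ne']) fun β _ => absMonomial_nonneg _ _
    _ ≤ (∑ β ∈ s, absMonomial β x) ^ m := by
        gcongr with β hβ
        · exact sum_nonneg fun β hβ => mul_nonneg (hw β hβ) (absMonomial_nonneg _ _)
        · exact mul_le_of_le_one_left (absMonomial_nonneg _ _)
            ((div_le_one hμs).2 (single_le_sum hμ hβ))

end AbsMonomial

lemma exists_rpow_le_mul_add {s : ℝ} (hs0 : 0 ≤ s) (hs1 : s < 1) {ε : ℝ} (hε : 0 < ε) :
    ∃ C, ∀ u : ℝ, 0 ≤ u → u ^ s ≤ ε * u + C := by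
  -- Young's inequality `(εu)^s b^{1-s} ≤ s εu + (1-s) b`, with `b` chosen so that `ε^s b^{1-s} = 1`
  set b := ε ^ (-s / (1 - s))
  have hb : 0 ≤ b := Real.rpow_nonneg hε.le _
  have hεb : ε ^ s * b ^ (1 - s) = 1 := by
    rw [← Real.rpow_mul hε.le, div_mul_cancel₀ _ (by linarith), ← Real.rpow_add hε, add_neg_cancel,
      Real.rpow_zero]
  refine ⟨b, fun u hu => ?_⟩
  calc u ^ s = (ε * u) ^ s * b ^ (1 - s) := by
        rw [Real.mul_rpow hε.le hu, mul_right_comm, hεb, one_mul]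
    _ ≤ s * (ε * u) + (1 - s) * b :=
        Real.geom_mean_le_arith_mean2_weighted hs0 (by linarith) (by positivity) hb (by ring)
    _ ≤ ε * u + b := by nlinarith [mul_nonneg hε.le hu]

section SublinearlyBoundedBelow

variable {X : Type*} {u g : X → ℝ}

def SublinearlyBoundedBelow (u g : X → ℝ) : Prop :=
  ∀ δ > 0, ∃ C, ∀ x, -(δ * u x) - C ≤ g x

lemma sublinearlyBoundedBelow_of_abs_le_rpow (hu : ∀ x, 0 ≤ u x) {s K : ℝ} (hs0 : 0 ≤ s)
    (hs1 : s < 1) (hK : 0 ≤ K) (hg : ∀ x, |g x| ≤ K * u x ^ s) : SublinearlyBoundedBelow u g := by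
  intro δ hδ
  obtain ⟨C, hC⟩ := exists_rpow_le_mul_add hs0 hs1 (div_pos hδ (by positivity : 0 < K + 1))
  refine ⟨K * C, fun x => ?_⟩
  have hKδ : K * (δ / (K + 1)) ≤ δ := by
    rw [mul_div_assoc', div_le_iff₀ (by positivity)]
    nlinarith
  calc -(δ * u x) - K * C ≤ -(K * (δ / (K + 1) * u x + C)) := by
        linarith [mul_le_mul_of_nonneg_right hKδ (hu x)]
    _ ≤ -(K * u x ^ s) := neg_le_neg (mul_le_mul_of_nonneg_left (hC (u x) (hu x)) hK)
    _ ≤ -|g x| := neg_le_neg (hg x)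
    _ ≤ g x := neg_abs_le _

lemma SublinearlyBoundedBelow.add {h : X → ℝ}
    (hg : SublinearlyBoundedBelow u g) (hh : SublinearlyBoundedBelow u h) :
    SublinearlyBoundedBelow u (g + h) := by
  intro δ hδ
  obtain ⟨C₁, hC₁⟩ := hg (δ / 2) (by positivity)
  obtain ⟨C₂, hC₂⟩ := hh (δ / 2) (by positivity)
  exact ⟨C₁ + C₂, fun x => by simp only [Pi.add_apply]; linarith [hC₁ x, hC₂ x]⟩

lemma SublinearlyBoundedBelow.sum (hu : ∀ x, 0 ≤ u x) {ι : Type*} {s : Finset ι}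
    {g : ι → X → ℝ} (hg : ∀ i ∈ s, SublinearlyBoundedBelow u (g i)) :
    SublinearlyBoundedBelow u fun x => ∑ i ∈ s, g i x := by
  classical
  induction s using Finset.induction_on with
  | empty => exact fun δ hδ => ⟨0, fun x => by simpa using mul_nonneg hδ.le (hu x)⟩
  | insert a s ha ih =>
    simp_rw [sum_insert ha]
    exact (hg a (mem_insert_self a s)).add (ih fun i hi => hg i (mem_insert_of_mem hi))

end SublinearlyBoundedBelow

section Faces

variable {E : Type*} [AddCommGroup E] [Module ℝ E] {P G : Set E}

lemma IsExtreme.mem_of_sum_smul_mem (hP : Convex ℝ P) (hG : IsExtreme ℝ P G) {ι : Type*}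
    {s : Finset ι} {w : ι → ℝ} {z : ι → E} (hw : ∀ i ∈ s, 0 < w i) (hw1 : ∑ i ∈ s, w i = 1)
    (hz : ∀ i ∈ s, z i ∈ P) (hmem : ∑ i ∈ s, w i • z i ∈ G) {a : ι} (ha : a ∈ s) : z a ∈ G := by
  classical
  set T := ∑ i ∈ s.erase a, w i
  have hwa : w a + T = 1 := by rw [add_comm, sum_erase_add _ _ ha, hw1]
  rw [← sum_erase_add _ _ ha] at hmem
  rcases (sum_nonneg fun i hi => (hw i (mem_of_mem_erase hi)).le : 0 ≤ T).eq_or_lt with hT | hT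
  · have hrest : ∑ i ∈ s.erase a, w i • z i = 0 := sum_eq_zero fun i hi => by
      rw [(sum_eq_zero_iff_of_nonneg fun j hj => (hw j (mem_of_mem_erase hj)).le).1 hT.symm i hi,
        zero_smul]
    rwa [hrest, zero_add, show w a = 1 by linarith, one_smul] at hmem
  · -- `z a` and the barycentre of the other points span an open segment through the sum
    have hy : (s.erase a).centerMass w z ∈ P := hP.centerMass_mem
      (fun i hi => (hw i (mem_of_mem_erase hi)).le) hT fun i hi => hz i (mem_of_mem_erase hi)
    refine hG.left_mem_of_mem_openSegment (hz a ha) hy hmem ⟨w a, T, hw a ha, hT, hwa, ?_⟩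
    rw [centerMass, smul_inv_smul₀ hT.ne', add_comm]

lemma Convex.exists_isExtreme_forall_mem_openSegment (hP : Convex ℝ P) {p : E} (hp : p ∈ P) :
    ∃ G, p ∈ G ∧ IsExtreme ℝ P G ∧ ∀ q ∈ G, q = p ∨ ∃ y ∈ P, p ∈ openSegment ℝ q y := by
  refine ⟨{q | q ∈ P ∧ (q = p ∨ ∃ y ∈ P, p ∈ openSegment ℝ q y)}, ⟨hp, .inl rfl⟩,
    ⟨fun q hq => hq.1, ?_⟩, fun q hq => hq.2⟩
  rintro x₁ hx₁ x₂ hx₂ x ⟨-, hx⟩ hseg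
  refine ⟨hx₁, .inr ?_⟩
  rcases hx with rfl | ⟨y, hy, hxy⟩
  · exact ⟨x₂, hx₂, hseg⟩
  obtain ⟨a, b, ha, hb, hab, rfl⟩ := hseg
  obtain ⟨c, d, hc, hd, hcd, rfl⟩ := hxy
  have he : 0 < c * b + d := by positivity
  refine ⟨(c * b / (c * b + d)) • x₂ + (d / (c * b + d)) • y,
    hP hx₂ hy (by positivity) (by positivity) (by field_simp), c * a, c * b + d, by positivity, he,
    by linear_combination c * hab + hcd, ?_⟩
  rw [smul_add, smul_smul, smul_smul, mul_div_cancel₀ _ he.ne', mul_div_cancel₀ _ he.ne']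
  module

end Faces

section NewtonPolytope

variable {n : ℕ} {f : MvPolynomial (Fin n) ℝ}

lemma expEmbed_zero : expEmbed (0 : Fin n →₀ ℕ) = 0 := by
  funext i; simp [expEmbed]

lemma expEmbed_injective : Function.Injective (expEmbed (n := n)) :=
  fun _ _ h => Finsupp.ext fun i => Nat.cast_injective (congrFun h i)

lemma expEmbed_mem_newtonInfty {α : Fin n →₀ ℕ} (hα : α ∈ insert 0 f.support) :
    expEmbed α ∈ newtonInfty f :=
  subset_convexHull _ _ ⟨α, by exact_mod_cast hα, rfl⟩

lemma convex_newtonInfty : Convex ℝ (newtonInfty f) := convex_convexHull _ _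

lemma extremePoints_newtonInfty :
    (newtonInfty f).extremePoints ℝ = expEmbed '' (V0 f : Set (Fin n →₀ ℕ)) := by
  ext y
  constructor
  · intro hy
    obtain ⟨α, hα, rfl⟩ := extremePoints_convexHull_subset hy
    exact ⟨α, mem_filter.2 ⟨by exact_mod_cast hα, hy⟩, rfl⟩
  · rintro ⟨α, hα, rfl⟩
    exact (mem_filter.1 hα).2

lemma newtonInfty_eq_convexHull_V0 :
    newtonInfty f = convexHull ℝ (expEmbed '' (V0 f : Set (Fin n →₀ ℕ))) := by
  have hcompact : IsCompact (newtonInfty f) :=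
    ((finite_toSet _).image _).isCompact_convexHull ℝ
  rw [← (((finite_toSet _).image _).isClosed_convexHull ℝ).closure_eq, ← extremePoints_newtonInfty,
    closure_convexHull_extremePoints hcompact convex_newtonInfty]

lemma exists_sum_V0_smul_eq_of_mem_newtonInfty {y : Fin n → ℝ} (hy : y ∈ newtonInfty f) :
    ∃ w : (Fin n →₀ ℕ) → ℝ, (∀ β ∈ V0 f, 0 ≤ w β) ∧ ∑ β ∈ V0 f, w β = 1 ∧
      ∑ β ∈ V0 f, w β • expEmbed β = y := by
  rw [newtonInfty_eq_convexHull_V0, ← coe_image, mem_convexHull'] at hy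
  obtain ⟨w, hw0, hw1, hwy⟩ := hy
  have hinj : Set.InjOn expEmbed (V0 f : Set (Fin n →₀ ℕ)) := expEmbed_injective.injOn
  rw [sum_image hinj] at hw1 hwy
  exact ⟨fun β => w (expEmbed β), fun β hβ => hw0 _ (mem_image_of_mem _ hβ), hw1, hwy⟩

lemma mem_support_of_mem_Vinf {α : Fin n →₀ ℕ} (hα : α ∈ Vinf f) : α ∈ f.support := by
  obtain ⟨h0, hV0⟩ := mem_erase.1 hα
  exact (mem_insert.1 (mem_filter.1 hV0).1).resolve_left h0

lemma ne_zero_of_mem_Dfin {α : Fin n →₀ ℕ} (hα : α ∈ Dfin f) : α ≠ 0 := by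
  rintro rfl
  obtain ⟨-, -, -, G, -, -, hG0, h0G⟩ := mem_filter.1 hα
  exact hG0 (expEmbed_zero ▸ h0G)

lemma mem_V0c_of_mem_Dfin {α : Fin n →₀ ℕ} (hα : α ∈ Dfin f) : α ∈ V0c f := by
  obtain ⟨hsupp, -, hV, -⟩ := mem_filter.1 hα
  exact mem_sdiff.2 ⟨hsupp, fun hV0 => hV (mem_erase.2 ⟨ne_zero_of_mem_Dfin hα, hV0⟩)⟩

lemma exists_eq_sum_Vinf_smul_of_not_isGemDegenerate {α : Fin n →₀ ℕ} (hα : α ∈ f.support)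
    (hV : α ∉ Vinf f) (hD : ¬ IsGemDegenerate f α) (h0 : α ≠ 0) :
    ∃ μ : (Fin n →₀ ℕ) → ℝ, (∀ β ∈ Vinf f, 0 ≤ μ β) ∧ 0 < ∑ β ∈ Vinf f, μ β ∧
      ∑ β ∈ Vinf f, μ β < 1 ∧ expEmbed α = ∑ β ∈ Vinf f, μ β • expEmbed β := by
  obtain ⟨G, hαG, hG, hGmin⟩ :=
    convex_newtonInfty.exists_isExtreme_forall_mem_openSegment
      (expEmbed_mem_newtonInfty (f := f) (mem_insert_of_mem hα))
  -- the smallest face through `α` must contain the origin, so `α` lies strictly inside `[0, y]`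
  have h0G : (0 : Fin n → ℝ) ∈ G := by
    by_contra h0G
    exact hD ⟨hα, hV, G, ⟨_, hαG⟩, hG, h0G, hαG⟩
  obtain ⟨y, hy, a, b, ha, hb, hab, hαy⟩ := (hGmin 0 h0G).resolve_left
    fun h => h0 (expEmbed_injective (by rw [← h, expEmbed_zero]))
  obtain ⟨w, hw0, hw1, hwy⟩ := exists_sum_V0_smul_eq_of_mem_newtonInfty hy
  have hwVinf : ∑ β ∈ Vinf f, w β • expEmbed β = y := by
    rw [Vinf, sum_erase _ (by rw [expEmbed_zero, smul_zero]), hwy]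
  have hexp : expEmbed α = ∑ β ∈ Vinf f, (b * w β) • expEmbed β := by
    simp_rw [mul_smul, ← smul_sum, hwVinf, ← hαy, smul_zero, zero_add]
  have hμ : ∀ β ∈ Vinf f, 0 ≤ b * w β := fun β hβ => mul_nonneg hb.le (hw0 β (mem_of_mem_erase hβ))
  have hle : ∑ β ∈ Vinf f, b * w β ≤ b := by
    rw [← mul_sum]
    refine mul_le_of_le_one_right hb.le (hw1 ▸ sum_le_sum_of_subset_of_nonneg (erase_subset _ _)
      fun β hβ _ => hw0 β hβ)
  refine ⟨fun β => b * w β, hμ, (sum_nonneg hμ).lt_of_ne fun h => h0 ?_, by linarith, hexp⟩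
  refine expEmbed_injective ?_
  rw [hexp, expEmbed_zero]
  exact sum_eq_zero fun β hβ => by rw [(sum_eq_zero_iff_of_nonneg hμ).1 h.symm β hβ, zero_smul]

variable {lam : (Fin n →₀ ℕ) → (Fin n →₀ ℕ) → ℝ}

lemma IsMinBary.sum_Wfin (hlam : IsMinBary f lam) {αs : Fin n →₀ ℕ} (h : αs ∈ V0c f) :
    ∑ β ∈ Wfin f lam αs, lam αs β = 1 ∧
      ∑ β ∈ Wfin f lam αs, lam αs β • expEmbed β = expEmbed αs := by
  obtain ⟨W, hWV0, -, hWpos, hWzero, hW1, hWα⟩ := hlam.2 αs h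
  have hW : Wfin f lam αs = W := by
    ext β
    simp only [Wfin, mem_filter]
    exact ⟨fun ⟨hβ, hpos⟩ => by_contra fun hβW => hpos.ne' (hWzero β hβ hβW),
      fun hβ => ⟨hWV0 hβ, hWpos β hβ⟩⟩
  rw [hW]
  exact ⟨hW1, hWα⟩

lemma Wfin_subset_Vinf (hlam : IsMinBary f lam) {αs : Fin n →₀ ℕ} (h : αs ∈ Dfin f) :
    Wfin f lam αs ⊆ Vinf f := by
  obtain ⟨-, -, -, G, -, hG, hG0, hαG⟩ := mem_filter.1 h
  obtain ⟨h1, hcomb⟩ := hlam.sum_Wfin (mem_V0c_of_mem_Dfin h)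
  intro β hβ
  have hβG : expEmbed β ∈ G := hG.mem_of_sum_smul_mem convex_newtonInfty
    (fun β hβ => (mem_filter.1 hβ).2) h1
    (fun β hβ => expEmbed_mem_newtonInfty (mem_filter.1 (mem_filter.1 hβ).1).1)
    (hcomb ▸ hαG) hβ
  exact mem_erase.2 ⟨fun h0 => hG0 (by rwa [h0, expEmbed_zero] at hβG), (mem_filter.1 hβ).1⟩

end NewtonPolytope

section VertexPart

variable {n : ℕ} {f : MvPolynomial (Fin n) ℝ}

def vertexPart (f : MvPolynomial (Fin n) ℝ) (x : Fin n → ℝ) : ℝ :=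
  ∑ α ∈ Vinf f, f.coeff α * absMonomial α x

def vertexMonomialSum (f : MvPolynomial (Fin n) ℝ) (x : Fin n → ℝ) : ℝ :=
  ∑ α ∈ Vinf f, absMonomial α x

lemma vertexMonomialSum_nonneg (x : Fin n → ℝ) : 0 ≤ vertexMonomialSum f x :=
  sum_nonneg fun _ _ => absMonomial_nonneg _ _

lemma exists_pos_mul_vertexMonomialSum_le (hC2 : CondC2 f) :
    ∃ c > 0, ∀ x, c * vertexMonomialSum f x ≤ vertexPart f x := by
  set c := (insert 1 ((Vinf f).image f.coeff)).min' (insert_nonempty _ _)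
  refine ⟨c, (lt_min'_iff _ _).2 fun a ha => ?_, fun x => ?_⟩
  · rcases mem_insert.1 ha with rfl | ha
    · exact one_pos
    · obtain ⟨α, hα, rfl⟩ := mem_image.1 ha
      exact hC2 α hα
  · rw [vertexMonomialSum, mul_sum]
    exact sum_le_sum fun α hα => mul_le_mul_of_nonneg_right
      (min'_le _ _ (mem_insert_of_mem (mem_image_of_mem _ hα))) (absMonomial_nonneg _ _)

lemma norm_le_max_one_vertexMonomialSum (hC3 : CondC3 f) (x : Fin n → ℝ) :
    ‖x‖ ≤ max 1 (vertexMonomialSum f x) := by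
  refine (pi_norm_le_iff_of_nonneg (by positivity)).2 fun i => ?_
  rw [Real.norm_eq_abs]
  obtain ⟨k, hk, hmem⟩ := hC3 i
  rcases le_or_gt |x i| 1 with h | h
  · exact h.trans (le_max_left _ _)
  calc |x i| ≤ |x i| ^ (2 * k) := le_self_pow₀ h.le (by omega)
    _ = absMonomial (Finsupp.single i (2 * k)) x := (absMonomial_single _ _ _).symm
    _ ≤ vertexMonomialSum f x :=
        single_le_sum (f := (absMonomial · x)) (fun _ _ => absMonomial_nonneg _ _) hmem
    _ ≤ _ := le_max_right _ _

lemma tendsto_vertexMonomialSum (hC3 : CondC3 f) :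
    Tendsto (vertexMonomialSum f) (comap (fun x : Fin n → ℝ => ‖x‖) atTop) atTop := by
  refine tendsto_atTop_mono' _ ?_ tendsto_comap
  filter_upwards [tendsto_comap.eventually (eventually_gt_atTop 1)] with x hx
  exact (le_max_iff.1 (norm_le_max_one_vertexMonomialSum hC3 x)).resolve_left hx.not_ge

lemma eval_eq_vertexPart_add (hC1 : CondC1 f) (x : Fin n → ℝ) :
    eval x f = vertexPart f x + ∑ α ∈ Dfin f, f.coeff α * ∏ i, x i ^ α i +
      ∑ α ∈ (f.support \ Vinf f) \ Dfin f, f.coeff α * ∏ i, x i ^ α i := by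
  have hD : Dfin f ⊆ f.support \ Vinf f := fun α hα =>
    mem_sdiff.2 ⟨(mem_filter.1 hα).1, (mem_filter.1 hα).2.2.1⟩
  have hV : vertexPart f x = ∑ α ∈ Vinf f, f.coeff α * ∏ i, x i ^ α i :=
    sum_congr rfl fun α hα => by rw [(hC1 α hα).prod_pow_eq_absMonomial]
  rw [eval_eq', hV, ← sum_sdiff fun α => mem_support_of_mem_Vinf, ← sum_sdiff hD]
  ring

variable {lam : (Fin n →₀ ℕ) → (Fin n →₀ ℕ) → ℝ}

lemma circuitNumber_pos (hC2 : CondC2 f) (hlam : IsMinBary f lam) {αs : Fin n →₀ ℕ}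
    (h : αs ∈ Dfin f) : 0 < circuitNumber f lam αs :=
  prod_pos fun β hβ => Real.rpow_pos_of_pos
    (div_pos (hC2 β (Wfin_subset_Vinf hlam h hβ)) (mem_filter.1 hβ).2) _

lemma circuitNumber_mul_absMonomial_le_vertexPart (hC2 : CondC2 f) (hlam : IsMinBary f lam)
    {αs : Fin n →₀ ℕ} (h : αs ∈ Dfin f) (x : Fin n → ℝ) :
    circuitNumber f lam αs * absMonomial αs x ≤ vertexPart f x := by
  obtain ⟨h1, hcomb⟩ := hlam.sum_Wfin (mem_V0c_of_mem_Dfin h)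
  have hW := Wfin_subset_Vinf hlam h
  calc circuitNumber f lam αs * absMonomial αs x
      ≤ ∑ β ∈ Wfin f lam αs, f.coeff β * absMonomial β x :=
        prod_div_rpow_mul_absMonomial_le_sum (fun β hβ => (mem_filter.1 hβ).2) h1
          (fun β hβ => (hC2 β (hW hβ)).le) hcomb.symm x
    _ ≤ vertexPart f x := sum_le_sum_of_subset_of_nonneg hW fun β hβ _ =>
        mul_nonneg (hC2 β hβ).le (absMonomial_nonneg _ _)

lemma exists_lt_forall_neg_mul_absMonomial_le {α : Fin n →₀ ℕ} {a q : ℝ}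
    (heven : IsEvenExp α → a > -q) (hodd : ¬ IsEvenExp α → |a| < q) :
    ∃ c < q, ∀ x, -(c * absMonomial α x) ≤ a * ∏ i, x i ^ α i := by
  by_cases he : IsEvenExp α
  · refine ⟨-a, by linarith [heven he], fun x => ?_⟩
    rw [he.prod_pow_eq_absMonomial, neg_mul, neg_neg]
  · refine ⟨|a|, hodd he, fun x => ?_⟩
    rw [← abs_prod_pow_eq_absMonomial, ← abs_mul]
    exact neg_abs_le _

lemma exists_lt_forall_neg_mul_vertexPart_le (hC2 : CondC2 f) (hlam : IsMinBary f lam)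
    {αs : Fin n →₀ ℕ} (h : αs ∈ Dfin f) {ω : ℝ} (hω : 0 < ω)
    (heven : IsEvenExp αs → f.coeff αs > -(ω * circuitNumber f lam αs))
    (hodd : ¬ IsEvenExp αs → |f.coeff αs| < ω * circuitNumber f lam αs) :
    ∃ ρ < ω, ∀ x, -(ρ * vertexPart f x) ≤ f.coeff αs * ∏ i, x i ^ αs i := by
  set Θ := circuitNumber f lam αs
  have hΘ : 0 < Θ := circuitNumber_pos hC2 hlam h
  obtain ⟨c, hc, hcx⟩ := exists_lt_forall_neg_mul_absMonomial_le heven hodd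
  refine ⟨max c 0 / Θ, (div_lt_iff₀ hΘ).2 (max_lt hc (by positivity)), fun x => ?_⟩
  calc -(max c 0 / Θ * vertexPart f x) ≤ -(max c 0 / Θ * (Θ * absMonomial αs x)) :=
        neg_le_neg (mul_le_mul_of_nonneg_left
          (circuitNumber_mul_absMonomial_le_vertexPart hC2 hlam h x) (by positivity))
    _ = -(max c 0 * absMonomial αs x) := by field_simp
    _ ≤ -(c * absMonomial αs x) :=
        neg_le_neg (mul_le_mul_of_nonneg_right (le_max_left _ _) (absMonomial_nonneg _ _))
    _ ≤ _ := hcx x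

lemma exists_lt_one_forall_neg_mul_vertexPart_le_sum_Dfin (hC2 : CondC2 f)
    (hlam : IsMinBary f lam) {ω : (Fin n →₀ ℕ) → ℝ} (hωpos : ∀ αs ∈ Dfin f, 0 < ω αs)
    (hωsum : ∑ αs ∈ Dfin f, ω αs ≤ 1)
    (heven : ∀ αs ∈ Dfin f, IsEvenExp αs → f.coeff αs > -(ω αs * circuitNumber f lam αs))
    (hodd : ∀ αs ∈ Dfin f, ¬ IsEvenExp αs → |f.coeff αs| < ω αs * circuitNumber f lam αs) :
    ∃ ρ < 1, ∀ x, -(ρ * vertexPart f x) ≤ ∑ αs ∈ Dfin f, f.coeff αs * ∏ i, x i ^ αs i := by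
  choose! ρ hρω hρ using fun αs h => exists_lt_forall_neg_mul_vertexPart_le hC2 hlam h
    (hωpos αs h) (heven αs h) (hodd αs h)
  refine ⟨∑ αs ∈ Dfin f, ρ αs, ?_, fun x => ?_⟩
  · rcases (Dfin f).eq_empty_or_nonempty with hD | hD
    · simp [hD]
    · exact (sum_lt_sum_of_nonempty hD hρω).trans_le hωsum
  · rw [sum_mul, ← sum_neg_distrib]
    exact sum_le_sum fun αs h => hρ αs h x

lemma exists_absMonomial_le_vertexMonomialSum_rpow {α : Fin n →₀ ℕ} (hα : α ∈ f.support)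
    (hV : α ∉ Vinf f) (hD : α ∉ Dfin f) :
    ∃ s : ℝ, 0 ≤ s ∧ s < 1 ∧ ∀ x, absMonomial α x ≤ vertexMonomialSum f x ^ s := by
  rcases eq_or_ne α 0 with rfl | h0
  · exact ⟨0, le_rfl, one_pos, fun x => by simp⟩
  obtain ⟨μ, hμ, hpos, hlt, hexp⟩ := exists_eq_sum_Vinf_smul_of_not_isGemDegenerate hα hV
    (fun h => hD (mem_filter.2 ⟨hα, h⟩)) h0
  exact ⟨∑ β ∈ Vinf f, μ β, hpos.le, hlt, absMonomial_le_sum_rpow hμ hpos hexp⟩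

lemma sublinearlyBoundedBelow_coeff_mul_prod_pow {α : Fin n →₀ ℕ}
    (hα : α ∈ (f.support \ Vinf f) \ Dfin f) :
    SublinearlyBoundedBelow (vertexMonomialSum f) fun x => f.coeff α * ∏ i, x i ^ α i := by
  obtain ⟨hα, hD⟩ := mem_sdiff.1 hα
  obtain ⟨hα, hV⟩ := mem_sdiff.1 hα
  obtain ⟨s, hs0, hs1, hle⟩ := exists_absMonomial_le_vertexMonomialSum_rpow hα hV hD
  refine sublinearlyBoundedBelow_of_abs_le_rpow vertexMonomialSum_nonneg hs0 hs1
    (abs_nonneg (f.coeff α)) fun x => ?_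
  rw [abs_mul, abs_prod_pow_eq_absMonomial]
  exact mul_le_mul_of_nonneg_left (hle x) (abs_nonneg _)

lemma exists_mul_vertexMonomialSum_sub_le_eval (hC1 : CondC1 f) (hC2 : CondC2 f)
    (hlam : IsMinBary f lam) {ω : (Fin n →₀ ℕ) → ℝ} (hωpos : ∀ αs ∈ Dfin f, 0 < ω αs)
    (hωsum : ∑ αs ∈ Dfin f, ω αs ≤ 1)
    (heven : ∀ αs ∈ Dfin f, IsEvenExp αs → f.coeff αs > -(ω αs * circuitNumber f lam αs))
    (hodd : ∀ αs ∈ Dfin f, ¬ IsEvenExp αs → |f.coeff αs| < ω αs * circuitNumber f lam αs) :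
    ∃ η > 0, ∃ C, ∀ x, η * vertexMonomialSum f x - C ≤ eval x f := by
  obtain ⟨c, hc, hcS⟩ := exists_pos_mul_vertexMonomialSum_le hC2
  obtain ⟨ρ, hρ, hD⟩ :=
    exists_lt_one_forall_neg_mul_vertexPart_le_sum_Dfin hC2 hlam hωpos hωsum heven hodd
  have hρ' : 0 < 1 - ρ := by linarith
  have hη : 0 < (1 - ρ) * c / 2 := by positivity
  obtain ⟨C, hC⟩ := SublinearlyBoundedBelow.sum (vertexMonomialSum_nonneg (f := f))
    (fun α hα => sublinearlyBoundedBelow_coeff_mul_prod_pow hα) _ hη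
  beta_reduce at hC
  refine ⟨_, hη, C, fun x => ?_⟩
  rw [eval_eq_vertexPart_add hC1]
  linarith [hD x, hC x, mul_le_mul_of_nonneg_left (hcS x) hρ'.le]

end VertexPart

/-- Theorem: sufficient conditions for coercivity via weights. -/
theorem stmt6 {n : ℕ} (f : MvPolynomial (Fin n) ℝ)
    (hC1 : CondC1 f) (hC2 : CondC2 f) (hC3 : CondC3 f)
    (lam : (Fin n →₀ ℕ) → (Fin n →₀ ℕ) → ℝ) (hlam : IsMinBary f lam)
    (ω : (Fin n →₀ ℕ) → ℝ)
    (hωpos : ∀ αs ∈ Dfin f, 0 < ω αs)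
    (hωsum : (∑ αs ∈ Dfin f, ω αs) ≤ 1)
    (heven : ∀ αs ∈ Dfin f, IsEvenExp αs → f.coeff αs > -(ω αs * circuitNumber f lam αs))
    (hodd : ∀ αs ∈ Dfin f, ¬ IsEvenExp αs → |f.coeff αs| < ω αs * circuitNumber f lam αs) :
    Coercive fun x => MvPolynomial.eval x f := by
  obtain ⟨η, hη, C, hbound⟩ :=
    exists_mul_vertexMonomialSum_sub_le_eval hC1 hC2 hlam hωpos hωsum heven hodd
  exact tendsto_atTop_mono hbound <|
    tendsto_atTop_add_const_right _ (-C) ((tendsto_vertexMonomialSum hC3).const_mul_atTop hη)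

end
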